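/- arXiv:1306.6843 — 2 statements merged into one kernel-verified Lean document; each statement's English description precedes it below -/
import Mathlib

section
/- Theorem 3: Let G' be the EAMP CG of an AMP CG G, S its set of selection nodes, and G'' the DAG obtained by replacing each undirected edge ε^A − ε^B of G' with ε^A → S_{ε^Aε^B} ← ε^B. Assuming G' and G'' have the same deterministic relationships, the LWF independence model of G' equals the LWF independence model of G'' conditioned on S: for all disjoint X, Y, Z ⊆ V ∪ ε, X ⊥_{G'} Y | Z (LWF) if and only if X ⊥_{G''} Y | Z ∪ S (LWF). -/
/- Mixed graphs with directed and undirected edges. -/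
structure MixedGraph (γ : Type*) where
  dir : γ → γ → Prop
  undir : γ → γ → Prop
  undir_symm : ∀ a b, undir a b → undir b a

namespace MixedGraph

variable {β : Type*} (G : MixedGraph β)

/-- Two nodes are adjacent if joined by some edge. -/
def adj (a b : β) : Prop := G.dir a b ∨ G.dir b a ∨ G.undir a b

/-- The graph is simple: no loops and at most one edge between any pair. -/
def Simple : Prop :=
  (∀ a, ¬ G.dir a a) ∧ (∀ a, ¬ G.undir a a) ∧
  (∀ a b, G.dir a b → ¬ G.dir b a) ∧ (∀ a b, G.dir a b → ¬ G.undir a b)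

/-- A semidirected cycle: a cycle whose first edge is directed and whose other
edges are directed or undirected (all pointing forwards). -/
def HasSemidirectedCycle : Prop :=
  ∃ (n : ℕ) (f : Fin (n + 2) → β),
    f 0 = f (Fin.last (n + 1)) ∧ G.dir (f 0) (f 1) ∧
    ∀ i : Fin (n + 1), G.dir (f i.castSucc) (f i.succ) ∨ G.undir (f i.castSucc) (f i.succ)

/-- A chain graph: a simple graph with no semidirected cycle. -/
def IsChainGraph : Prop := G.Simple ∧ ¬ G.HasSemidirectedCycle

/-- A DAG: a chain graph with no undirected edges. -/
def IsDAG : Prop := G.IsChainGraph ∧ ∀ a b, ¬ G.undir a b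

/-- Parents of a set of nodes. -/
def pa (X : Set β) : Set β := {v | v ∉ X ∧ ∃ x ∈ X, G.dir v x}

/-- Strict ascendants of a set of nodes (strictly descending route to the set). -/
def san (W : Set β) : Set β := {v | v ∉ W ∧ ∃ w ∈ W, Relation.TransGen G.dir v w}

/-- B is a triplex node between A and C: A → B ← C, A → B − C, or A − B ← C. -/
def triplex (A B C : β) : Prop :=
  (G.dir A B ∧ G.dir C B) ∨ (G.dir A B ∧ G.undir B C) ∨ (G.undir A B ∧ G.dir C B)

/-- B is a non-triplex node between A and C. -/
def nontriplex (A B C : β) : Prop :=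
  G.adj A B ∧ G.adj B C ∧ ¬ G.triplex A B C

/-- A route: a nonempty sequence of consecutively adjacent nodes. -/
def IsRoute (l : List β) : Prop := l ≠ [] ∧ l.Chain' G.adj

/-- A path that is open given the determined set `D` (AMP path-based semantics). -/
def AMPOpenPath (D : Set β) (l : List β) : Prop :=
  G.IsRoute l ∧ l.Nodup ∧
  (∀ A B C, [A, B, C] <:+: l → G.triplex A B C → B ∈ D ∪ G.san D) ∧
  (∀ A B C, [A, B, C] <:+: l → G.nontriplex A B C → B ∈ D →
    (G.undir A B ∧ G.undir B C ∧ ∃ p ∈ G.pa {B}, p ∉ D))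

/-- A route that is open given the determined set `D` (AMP route-based semantics). -/
def AMPOpenRoute (D : Set β) (l : List β) : Prop :=
  G.IsRoute l ∧
  (∀ A B C, [A, B, C] <:+: l → G.triplex A B C → B ∈ D) ∧
  (∀ A B C, [A, B, C] <:+: l → G.nontriplex A B C → B ∉ D)

/-- AMP separation (path-based) of X and Y given determined set D. -/
def AMPSep (D X Y : Set β) : Prop :=
  ∀ (l : List β) (x y : β), x ∈ X → y ∈ Y → l.head? = some x → l.getLast? = some y →
    ¬ G.AMPOpenPath D l

/-- AMP separation (route-based) of X and Y given determined set D. -/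
def AMPSepRoute (D X Y : Set β) : Prop :=
  ∀ (l : List β) (x y : β), x ∈ X → y ∈ Y → l.head? = some x → l.getLast? = some y →
    ¬ G.AMPOpenRoute D l

/-- `s` is a collider section of the route `l`: a maximal undirected subroute of `l`
entered by arrowheads at both ends. -/
def IsColliderSection (l s : List β) : Prop :=
  s ≠ [] ∧ List.Chain' G.undir s ∧
  ∃ pre post A C, l = pre ++ s ++ post ∧
    pre.getLast? = some A ∧ post.head? = some C ∧
    (∀ b, s.head? = some b → G.dir A b) ∧ (∀ b, s.getLast? = some b → G.dir C b) ∧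
    (∀ a b, pre.getLast? = some a → s.head? = some b → ¬ G.undir a b) ∧
    (∀ a b, s.getLast? = some a → post.head? = some b → ¬ G.undir a b)

/-- `s` is a non-collider section of the route `l`: a maximal undirected subroute of `l`
not entered by arrowheads at both ends. -/
def IsNonColliderSection (l s : List β) : Prop :=
  s ≠ [] ∧ List.Chain' G.undir s ∧
  ∃ pre post, l = pre ++ s ++ post ∧
    (∀ a b, pre.getLast? = some a → s.head? = some b → ¬ G.undir a b) ∧
    (∀ a b, s.getLast? = some a → post.head? = some b → ¬ G.undir a b) ∧
    ¬ ((∃ A, pre.getLast? = some A ∧ ∀ b, s.head? = some b → G.dir A b) ∧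
       (∃ C, post.head? = some C ∧ ∀ b, s.getLast? = some b → G.dir C b))

/-- A route that is open given the determined set `D` (LWF semantics). -/
def LWFOpenRoute (D : Set β) (l : List β) : Prop :=
  G.IsRoute l ∧
  (∀ s, G.IsColliderSection l s → ∃ x ∈ s, x ∈ D) ∧
  (∀ s, G.IsNonColliderSection l s → ∀ x ∈ s, x ∉ D)

/-- LWF separation of X and Y given determined set D. -/
def LWFSep (D X Y : Set β) : Prop :=
  ∀ (l : List β) (x y : β), x ∈ X → y ∈ Y → l.head? = some x → l.getLast? = some y →
    ¬ G.LWFOpenRoute D l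

/-- Closure of Z under a set `det` of deterministic relationships: `(S, a) ∈ det`
means that `a` is a function of `S`. -/
inductive Determined (det : Set (Set β × β)) (Z : Set β) : β → Prop
  | base : ∀ a, a ∈ Z → Determined det Z a
  | step : ∀ (S : Set β) (a : β), (S, a) ∈ det → (∀ b ∈ S, Determined det Z b) →
      Determined det Z a

/-- The set D(Z) of nodes determined by Z. -/
def DSet (det : Set (Set β × β)) (Z : Set β) : Set β := {a | Determined det Z a}

end MixedGraph

section EAMP

variable {α : Type*}

/-- Directed edges of the EAMP CG: `inl` nodes are the original nodes,
`inr` nodes are the error nodes. -/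
def eampDir (G : MixedGraph α) : (α ⊕ α) → (α ⊕ α) → Prop
  | Sum.inl x, Sum.inl y => G.dir x y
  | Sum.inr x, Sum.inl y => x = y
  | _, _ => False

/-- Undirected edges of the EAMP CG: `ε^A − ε^B` for each `A − B` of G. -/
def eampUndir (G : MixedGraph α) : (α ⊕ α) → (α ⊕ α) → Prop
  | Sum.inr x, Sum.inr y => G.undir x y
  | _, _ => False

/-- The EAMP CG G' of an AMP CG G: add `ε^A → A` for each node A and replace
each undirected edge `A − B` by `ε^A − ε^B`. -/
def eamp (G : MixedGraph α) : MixedGraph (α ⊕ α) where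
  dir := eampDir G
  undir := eampUndir G
  undir_symm := by
    rintro (x | x) (y | y) h <;>
      simp only [eampUndir] at h ⊢ <;>
      first
        | exact h.elim
        | exact G.undir_symm _ _ h

/-- The parents of A in G, embedded as nodes of the EAMP CG. -/
def eampPa (G : MixedGraph α) (A : α) : Set (α ⊕ α) := {x | ∃ B, G.dir B A ∧ x = Sum.inl B}

/-- The deterministic relationships of the EAMP CG: each A is a function of
`pa_G(A) ∪ {ε^A}`, and each `ε^A` is a function of `pa_G(A) ∪ {A}`. -/
def eampDet (G : MixedGraph α) : Set (Set (α ⊕ α) × (α ⊕ α)) :=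
  {p | (∃ A, p = (eampPa G A ∪ {Sum.inr A}, Sum.inl A)) ∨
       (∃ A, p = (eampPa G A ∪ {Sum.inl A}, Sum.inr A))}

/-- Marginalize the node B out of G: add `A → C` for every pair `A → B`, `B → C`,
then delete B together with all edges it participates in. -/
def marg {β : Type*} (G : MixedGraph β) (B : β) : MixedGraph β where
  dir a c := a ≠ B ∧ c ≠ B ∧ (G.dir a c ∨ (G.dir a B ∧ G.dir B c))
  undir a c := a ≠ B ∧ c ≠ B ∧ G.undir a c
  undir_symm := by
    rintro a c ⟨h1, h2, h3⟩
    exact ⟨h2, h1, G.undir_symm _ _ h3⟩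

/-- Marginalize a list of nodes out of G, one at a time. -/
def margList {β : Type*} (G : MixedGraph β) (L : List β) : MixedGraph β := L.foldl marg G

/-- Directed edges of the DAG G'': those of G' among `V ∪ ε`, plus
`ε^A → S_{ε^Aε^B} ← ε^B` for each undirected edge `ε^A − ε^B` of G'. -/
def dagDir (G : MixedGraph α) : ((α ⊕ α) ⊕ Sym2 α) → ((α ⊕ α) ⊕ Sym2 α) → Prop
  | Sum.inl x, Sum.inl y => (eamp G).dir x y
  | Sum.inl (Sum.inr x), Sum.inr s => ∃ y, G.undir x y ∧ s = s(x, y)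
  | _, _ => False

/-- The DAG G'' obtained from G' by replacing each `ε^A − ε^B` with
`ε^A → S_{ε^Aε^B} ← ε^B`, where the selection nodes are fresh. -/
def dagOf (G : MixedGraph α) : MixedGraph ((α ⊕ α) ⊕ Sym2 α) where
  dir := dagDir G
  undir _ _ := False
  undir_symm := by intro a b h; exact h.elim

/-- The set S of selection nodes of G''. -/
def selNodes (G : MixedGraph α) : Set ((α ⊕ α) ⊕ Sym2 α) :=
  {v | ∃ x y, G.undir x y ∧ v = Sum.inr s(x, y)}

/-- The deterministic relationships of G'' (the same as those of G'). -/
def dagDet (G : MixedGraph α) : Set (Set ((α ⊕ α) ⊕ Sym2 α) × ((α ⊕ α) ⊕ Sym2 α)) :=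
  {p | ∃ q ∈ eampDet G, p = (Sum.inl '' q.1, Sum.inl q.2)}

/-- Structural characterization of EAMP CGs over `W ∪ ε`: a chain graph whose
undirected edges join only error nodes and whose error nodes have no incoming
directed edges. -/
def IsEAMPStruct (G : MixedGraph (α ⊕ α)) : Prop :=
  G.IsChainGraph ∧
  (∀ a b, G.undir a b → (∃ x, a = Sum.inr x) ∧ ∃ y, b = Sum.inr y) ∧
  (∀ a x, ¬ G.dir a (Sum.inr x))

/-- K is a connectivity component: a maximal set connected by undirected paths. -/
def IsConnComp {β : Type*} (G : MixedGraph β) (K : Set β) : Prop :=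
  ∃ a, K = {b | Relation.ReflTransGen G.undir a b}

end EAMP

/-! In both `G'` and `G''` no undirected edge meets an arrowhead, so every collider section is a
single node, and a route is LWF-open given `D` exactly when each of its nodes lies in `D` iff it
is a collider `→ w ←` on the route.

Subdividing every edge `ε^A − ε^B` of a route of `G'` by its selection node preserves openness
in both directions: the selection nodes are colliders and lie in `D(Z ∪ S)`, error nodes are
never colliders, the original nodes keep their neighbours, and `D(Z ∪ S)` meets `V ∪ ε` in
`D(Z)`. Conversely, an open route of `G''` may be shortened until it never turns back at a
selection node (`ε^A → S ← ε^A`), and then it is the subdivision of a route of `G'`. -/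

namespace List

variable {β : Type*}

def TripleChain (P : β → β → β → Prop) : List β → Prop
  | a :: b :: c :: t => P a b c ∧ TripleChain P (b :: c :: t)
  | _ => True

variable {P : β → β → β → Prop}

theorem tripleChain_cons_cons {a b : β} {t : List β} :
    TripleChain P (a :: b :: t) ↔ (∀ c ∈ t.head?, P a b c) ∧ TripleChain P (b :: t) := by
  cases t <;> simp [TripleChain]

theorem tripleChain_split {u v : List β} {b : β} :
    TripleChain P (u ++ b :: v) ↔
      TripleChain P (u ++ [b]) ∧ (∀ a ∈ u.getLast?, ∀ c ∈ v.head?, P a b c) ∧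
        TripleChain P (b :: v) := by
  induction u with
  | nil => simp [TripleChain]
  | cons a u ih =>
    cases u with
    | nil => simp [tripleChain_cons_cons, TripleChain]
    | cons a' u =>
      simp only [cons_append, tripleChain_cons_cons] at ih ⊢
      rw [ih]
      cases u <;> simp [and_assoc]

theorem tripleChain_iff {l : List β} :
    TripleChain P l ↔
      ∀ u b v, l = u ++ b :: v → ∀ a ∈ u.getLast?, ∀ c ∈ v.head?, P a b c := by
  constructor
  · rintro h u b v rfl
    exact (tripleChain_split.1 h).2.1
  · induction l with
    | nil => simp [TripleChain]
    | cons a t ih =>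
      intro h
      cases t with
      | nil => simp [TripleChain]
      | cons b t =>
        refine tripleChain_cons_cons.2 ⟨h [a] b t rfl a rfl, ih fun u b' v hl a' ha' => ?_⟩
        exact h (a :: u) b' v (by rw [hl, cons_append]) a'
          (by rw [getLast?_cons, Option.mem_def.1 ha']; rfl)

theorem exists_maximal_isChain_cons (U : β → β → Prop) (w : β) (v : List β) :
    ∃ r v', v = r ++ v' ∧ IsChain U (w :: r) ∧
      ∀ a ∈ (w :: r).getLast?, ∀ b ∈ v'.head?, ¬ U a b := by
  induction v generalizing w with
  | nil => exact ⟨[], [], rfl, isChain_singleton w, by simp⟩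
  | cons c t ih =>
    by_cases h : U w c
    · obtain ⟨r, v', rfl, hch, hmax⟩ := ih c
      exact ⟨c :: r, v', rfl, isChain_cons_cons.2 ⟨h, hch⟩, by rwa [getLast?_cons_cons]⟩
    · exact ⟨[], c :: t, rfl, isChain_singleton w, by simpa using h⟩

theorem exists_maximal_isChain_around (U : β → β → Prop) (u : List β) (w : β) (v : List β) :
    ∃ u' r₁ r₂ v', u = u' ++ r₁ ∧ v = r₂ ++ v' ∧ IsChain U (r₁ ++ w :: r₂) ∧
      (∀ a b, u'.getLast? = some a → (r₁ ++ w :: r₂).head? = some b → ¬ U a b) ∧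
      ∀ a b, (r₁ ++ w :: r₂).getLast? = some a → v'.head? = some b → ¬ U a b := by
  obtain ⟨r₁, u', hu, hch₁, hmax₁⟩ := exists_maximal_isChain_cons (fun a b => U b a) w u.reverse
  obtain ⟨r₂, v', rfl, hch₂, hmax₂⟩ := exists_maximal_isChain_cons U w v
  refine ⟨u'.reverse, r₁.reverse, r₂, v', by rw [← reverse_reverse u, hu, reverse_append], rfl,
    ?_, ?_, ?_⟩
  · exact isChain_split.2 ⟨by simpa using isChain_reverse.2 hch₁, hch₂⟩
  · intro a b ha hb
    have hhead : (r₁.reverse ++ w :: r₂).head? = (w :: r₁).getLast? := by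
      simp [head?_append, ← head?_reverse]
    exact hmax₁ b (hhead ▸ hb) a (by simpa using ha)
  · intro a b ha
    exact hmax₂ a (by simpa using ha) b

end List

namespace MixedGraph

variable {β : Type*} (G : MixedGraph β)

theorem adj_symm {a b : β} (h : G.adj a b) : G.adj b a := by
  rcases h with h | h | h
  exacts [Or.inr (Or.inl h), Or.inl h, Or.inr (Or.inr (G.undir_symm _ _ h))]

def IsOpenTriple (D : Set β) (a b c : β) : Prop := G.dir a b ∧ G.dir c b ↔ b ∈ D

def ColliderOpenRoute (D : Set β) (l : List β) : Prop :=
  G.IsRoute l ∧ ∀ u w v, l = u ++ w :: v →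
    (w ∈ D ↔ ∃ A ∈ u.getLast?, ∃ C ∈ v.head?, G.dir A w ∧ G.dir C w)

theorem colliderOpenRoute_iff_tripleChain {D : Set β} {l : List β} :
    G.ColliderOpenRoute D l ↔ G.IsRoute l ∧ (∀ w ∈ l.head?, w ∉ D) ∧
      (∀ w ∈ l.getLast?, w ∉ D) ∧ l.TripleChain (G.IsOpenTriple D) := by
  refine and_congr_right fun _ => ⟨fun h => ⟨?_, ?_, ?_⟩, fun ⟨hhead, hlast, htc⟩ => ?_⟩
  · intro w hw
    obtain ⟨t, rfl⟩ := List.head?_eq_some_iff.1 hw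
    simpa using h [] w t rfl
  · intro w hw
    obtain ⟨t, rfl⟩ := List.getLast?_eq_some_iff.1 hw
    simpa using h t w [] rfl
  · refine List.tripleChain_iff.2 fun u b v hl a ha c hc => ?_
    rw [IsOpenTriple, h u b v hl, Option.mem_def.1 ha, Option.mem_def.1 hc]
    simp
  · rintro u w v rfl
    rcases u.eq_nil_or_concat' with rfl | ⟨u, a, rfl⟩
    · simpa using hhead w rfl
    rcases v with _ | ⟨c, v⟩
    · simpa using hlast w (by simp)
    · simpa using (List.tripleChain_iff.1 htc _ w _ rfl a (by simp) c rfl).symm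

variable {G}

theorem eq_nil_of_isChain_undir (hG : ∀ a b c, G.dir a b → ¬ G.undir b c)
    {r₁ r₂ : List β} {A w : β} (hch : (r₁ ++ w :: r₂).IsChain G.undir) (hA : G.dir A w) :
    r₁ = [] ∧ r₂ = [] := by
  obtain ⟨hch₁, hch₂⟩ := List.isChain_split.1 hch
  constructor
  · rcases r₁.eq_nil_or_concat' with rfl | ⟨r, b, rfl⟩
    · rfl
    · have hbw : G.undir b w := (List.isChain_append.1 hch₁).2.2 b (by simp) w rfl
      exact absurd (G.undir_symm _ _ hbw) (hG A w b hA)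
  · rcases r₂ with _ | ⟨c, r⟩
    · rfl
    · exact absurd (List.isChain_cons_cons.1 hch₂).1 (hG A w c hA)

theorem IsColliderSection.eq_singleton (hG : ∀ a b c, G.dir a b → ¬ G.undir b c)
    {l s : List β} (h : G.IsColliderSection l s) : ∃ b, s = [b] := by
  obtain ⟨hs, hch, -, -, A, -, -, -, -, hdA, -⟩ := h
  obtain ⟨b, r, rfl⟩ := List.exists_cons_of_ne_nil hs
  obtain ⟨-, rfl⟩ := eq_nil_of_isChain_undir hG (r₁ := []) hch (hdA b rfl)
  exact ⟨b, rfl⟩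

theorem lwfOpenRoute_iff_colliderOpenRoute (hG : ∀ a b c, G.dir a b → ¬ G.undir b c)
    {D : Set β} {l : List β} : G.LWFOpenRoute D l ↔ G.ColliderOpenRoute D l := by
  refine and_congr_right fun _ => ⟨fun ⟨hcol, hnon⟩ => ?_, fun h => ⟨?_, ?_⟩⟩
  · rintro u w v rfl
    obtain ⟨u', r₁, r₂, v', rfl, rfl, hch, hpre, hpost⟩ :=
      List.exists_maximal_isChain_around G.undir u w v
    have hl : u' ++ r₁ ++ w :: (r₂ ++ v') = u' ++ (r₁ ++ w :: r₂) ++ v' := by simp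
    by_cases hboth :
        (∃ A, u'.getLast? = some A ∧ ∀ b, (r₁ ++ w :: r₂).head? = some b → G.dir A b) ∧
          (∃ C, v'.head? = some C ∧ ∀ b, (r₁ ++ w :: r₂).getLast? = some b → G.dir C b)
    · obtain ⟨⟨A, hA, hdA⟩, ⟨C, hC, hdC⟩⟩ := hboth
      have hsec : G.IsColliderSection _ _ :=
        ⟨by simp, hch, u', v', A, C, hl, hA, hC, hdA, hdC, hpre, hpost⟩
      obtain ⟨b, hb⟩ := hsec.eq_singleton hG
      obtain ⟨rfl, rfl, rfl⟩ : r₁ = [] ∧ w = b ∧ r₂ = [] := by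
        simpa [List.append_eq_singleton_iff] using hb
      obtain ⟨x, hx, hxD⟩ := hcol _ hsec
      obtain rfl : x = w := by simpa using hx
      exact iff_of_true hxD ⟨A, by simpa using hA, C, hC, hdA x rfl, hdC x rfl⟩
    · have hsec : G.IsNonColliderSection _ _ := ⟨by simp, hch, u', v', hl, hpre, hpost, hboth⟩
      refine iff_of_false (hnon _ hsec w (by simp)) ?_
      rintro ⟨A, hA, C, hC, hdA, hdC⟩
      obtain ⟨rfl, rfl⟩ := eq_nil_of_isChain_undir hG hch hdA
      exact hboth ⟨⟨A, by simpa using hA, by simpa using hdA⟩,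
        ⟨C, by simpa using hC, by simpa using hdC⟩⟩
  · intro s hsec
    obtain ⟨b, rfl⟩ := hsec.eq_singleton hG
    obtain ⟨-, -, pre, post, A, C, hl, hA, hC, hdA, hdC, -⟩ := hsec
    exact ⟨b, by simp, (h pre b post (by simpa using hl)).2 ⟨A, hA, C, hC, hdA b rfl, hdC b rfl⟩⟩
  · intro s hsec x hx hxD
    obtain ⟨-, hch, pre, post, hl, -, -, hno⟩ := hsec
    obtain ⟨s₁, s₂, rfl⟩ := List.append_of_mem hx
    obtain ⟨A, hA, C, hC, hdA, hdC⟩ := (h (pre ++ s₁) x (s₂ ++ post) (by simpa using hl)).1 hxD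
    obtain ⟨rfl, rfl⟩ := eq_nil_of_isChain_undir hG hch hdA
    exact hno ⟨⟨A, by simpa using hA, by simpa using hdA⟩,
      ⟨C, by simpa using hC, by simpa using hdC⟩⟩

end MixedGraph

open MixedGraph Sum

section EAMPRoutes

variable {α : Type*} {G : MixedGraph α}

theorem eamp_not_dir_inr (a : α ⊕ α) (e : α) : ¬ (eamp G).dir a (inr e) := by
  cases a <;> exact id

theorem eamp_undir_iff {a b : α ⊕ α} :
    (eamp G).undir a b ↔ ∃ x y, a = inr x ∧ b = inr y ∧ G.undir x y := by
  cases a <;> cases b <;> simp [eamp, eampUndir]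

theorem eamp_not_undir_of_dir (a b c : α ⊕ α) (h : (eamp G).dir a b) :
    ¬ (eamp G).undir b c := by
  rw [eamp_undir_iff]
  rintro ⟨x, y, rfl, rfl, -⟩
  exact eamp_not_dir_inr a x h

theorem dagOf_dir_inl_inl {a b : α ⊕ α} : (dagOf G).dir (inl a) (inl b) ↔ (eamp G).dir a b := by
  cases a <;> cases b <;> exact Iff.rfl

theorem dagOf_not_dir_inr (s : Sym2 α) (w : (α ⊕ α) ⊕ Sym2 α) : ¬ (dagOf G).dir (inr s) w := by
  cases w <;> exact id

theorem dagOf_not_dir_inl_inr (w : (α ⊕ α) ⊕ Sym2 α) (e : α) :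
    ¬ (dagOf G).dir w (inl (inr e)) := by
  rcases w with (_ | _) | _ <;> exact id

theorem dagOf_dir_inl_inr {a : α ⊕ α} {s : Sym2 α} :
    (dagOf G).dir (inl a) (inr s) ↔ ∃ x y, a = inr x ∧ G.undir x y ∧ s = s(x, y) := by
  cases a <;> simp [dagOf, dagDir]

theorem dagOf_adj_inl_inl {a b : α ⊕ α} :
    (dagOf G).adj (inl a) (inl b) ↔ (eamp G).dir a b ∨ (eamp G).dir b a := by
  simp only [adj, dagOf_dir_inl_inl]
  exact or_congr_right (or_iff_left id)

theorem dagOf_adj_inl_inr {a : α ⊕ α} {s : Sym2 α} :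
    (dagOf G).adj (inl a) (inr s) ↔ ∃ x y, a = inr x ∧ G.undir x y ∧ s = s(x, y) := by
  rw [MixedGraph.adj, dagOf_dir_inl_inr]
  exact or_iff_left (not_or.2 ⟨dagOf_not_dir_inr s _, id⟩)

theorem dagOf_not_adj_inr_inr (s s' : Sym2 α) : ¬ (dagOf G).adj (inr s) (inr s') :=
  fun h => h.elim (dagOf_not_dir_inr s _) (Or.elim · (dagOf_not_dir_inr s' _) id)

/-- Used only for two error nodes `inr x`, `inr y`, where it is `s(x, y)`. -/
def selNode (a b : α ⊕ α) : Sym2 α := s(Sum.elim id id a, Sum.elim id id b)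

theorem dagOf_dir_selNode {a b : α ⊕ α} (h : (eamp G).undir a b) :
    (dagOf G).dir (inl a) (inr (selNode a b)) ∧ (dagOf G).dir (inl b) (inr (selNode a b)) := by
  obtain ⟨x, y, rfl, rfl, hxy⟩ := eamp_undir_iff.1 h
  exact ⟨⟨y, hxy, rfl⟩, ⟨x, G.undir_symm _ _ hxy, Sym2.eq_swap⟩⟩

theorem selNode_mem_selNodes {a b : α ⊕ α} (h : (eamp G).undir a b) :
    inr (selNode a b) ∈ selNodes G := by
  obtain ⟨x, y, rfl, rfl, hxy⟩ := eamp_undir_iff.1 h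
  exact ⟨x, y, hxy, rfl⟩

open scoped Classical in
noncomputable def subdivide (G : MixedGraph α) : List (α ⊕ α) → List ((α ⊕ α) ⊕ Sym2 α)
  | [] => []
  | [a] => [inl a]
  | a :: b :: t =>
    if (eamp G).undir a b then inl a :: inr (selNode a b) :: subdivide G (b :: t)
    else inl a :: subdivide G (b :: t)

theorem subdivide_head? (l : List (α ⊕ α)) : (subdivide G l).head? = l.head?.map inl := by
  match l with
  | [] | [_] => rfl
  | a :: b :: t => rw [subdivide]; split_ifs <;> rfl

theorem subdivide_getLast? (l : List (α ⊕ α)) :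
    (subdivide G l).getLast? = l.getLast?.map inl := by
  match l with
  | [] | [_] => rfl
  | a :: b :: t =>
    have ih := subdivide_getLast? (b :: t)
    rw [subdivide]
    split_ifs <;> simp [List.getLast?_cons, ih]

theorem subdivide_eq_nil_iff {l : List (α ⊕ α)} : subdivide G l = [] ↔ l = [] := by
  rw [← List.head?_eq_none_iff, subdivide_head?, Option.map_eq_none_iff, List.head?_eq_none_iff]

theorem isChain_subdivide_iff {l : List (α ⊕ α)} :
    (subdivide G l).IsChain (dagOf G).adj ↔ l.IsChain (eamp G).adj := by
  match l with
  | [] | [_] => simp [subdivide]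
  | a :: b :: t =>
    have ih := isChain_subdivide_iff (l := b :: t)
    obtain ⟨R, hR⟩ := List.head?_eq_some_iff.1 (subdivide_head? (G := G) (b :: t))
    rw [hR] at ih
    rw [subdivide, hR]
    split_ifs with hab
    · simp only [List.isChain_cons_cons, ih]
      have hS := dagOf_dir_selNode hab
      exact ⟨fun h => ⟨Or.inr (Or.inr hab), h.2.2⟩,
        fun h => ⟨Or.inl hS.1, Or.inr (Or.inl hS.2), h.2⟩⟩
    · rw [List.isChain_cons_cons, ih, dagOf_adj_inl_inl, List.isChain_cons_cons]
      simp only [MixedGraph.adj, hab, or_false]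

theorem tripleChain_subdivide_iff {D' : Set (α ⊕ α)} {D'' : Set ((α ⊕ α) ⊕ Sym2 α)}
    (hinl : ∀ v, inl v ∈ D'' ↔ v ∈ D') (hsel : selNodes G ⊆ D'') {l : List (α ⊕ α)} :
    (subdivide G l).TripleChain ((dagOf G).IsOpenTriple D'') ↔
      l.TripleChain ((eamp G).IsOpenTriple D') := by
  have herr'' : ∀ x e z, (dagOf G).IsOpenTriple D'' x (inl (inr e)) z ↔ inr e ∉ D' := by
    simp [IsOpenTriple, dagOf_not_dir_inl_inr, hinl]
  have herr' : ∀ x e z, (eamp G).IsOpenTriple D' x (inr e) z ↔ inr e ∉ D' := by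
    simp [IsOpenTriple, eamp_not_dir_inr]
  match l with
  | [] | [_] => simp [subdivide, List.TripleChain]
  | [a, b] =>
    rw [subdivide]
    split_ifs with hab
    · simp [subdivide, List.TripleChain, IsOpenTriple, dagOf_dir_selNode hab,
        hsel (selNode_mem_selNodes hab)]
    · simp [subdivide, List.TripleChain]
  | a :: b :: c :: t =>
    have ih := tripleChain_subdivide_iff hinl hsel (l := b :: c :: t)
    -- In the subdivision `b` has right neighbour `X` and left neighbour `inl a`, or a selection
    -- node when `b` is an error node.
    obtain ⟨X, R, hX, hmid⟩ : ∃ X R, subdivide G (b :: c :: t) = inl b :: X :: R ∧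
        ∀ x, (x = inl a ∨ (eamp G).undir a b) →
          ((dagOf G).IsOpenTriple D'' x (inl b) X ↔ (eamp G).IsOpenTriple D' a b c) := by
      rw [subdivide]
      split_ifs with hbc
      · refine ⟨_, _, rfl, fun x _ => ?_⟩
        obtain ⟨e, -, rfl, -, -⟩ := eamp_undir_iff.1 hbc
        rw [herr'', herr']
      · obtain ⟨R, hR⟩ := List.head?_eq_some_iff.1 (subdivide_head? (G := G) (c :: t))
        refine ⟨inl c, R, by rw [hR], ?_⟩
        rintro x (rfl | hab)
        · simp [IsOpenTriple, dagOf_dir_inl_inl, hinl]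
        · obtain ⟨-, e, -, rfl, -⟩ := eamp_undir_iff.1 hab
          rw [herr'', herr']
    rw [List.tripleChain_cons_cons (t := c :: t), ← ih, subdivide, hX]
    split_ifs with hab
    · have hS : (dagOf G).IsOpenTriple D'' (inl a) (inr (selNode a b)) (inl b) :=
        iff_of_true (dagOf_dir_selNode hab) (hsel (selNode_mem_selNodes hab))
      simp [List.tripleChain_cons_cons, hS, hmid _ (Or.inr hab)]
    · simp [List.tripleChain_cons_cons, hmid _ (Or.inl rfl)]

theorem colliderOpenRoute_subdivide_iff {D' : Set (α ⊕ α)} {D'' : Set ((α ⊕ α) ⊕ Sym2 α)}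
    (hinl : ∀ v, inl v ∈ D'' ↔ v ∈ D') (hsel : selNodes G ⊆ D'') {l : List (α ⊕ α)} :
    (dagOf G).ColliderOpenRoute D'' (subdivide G l) ↔ (eamp G).ColliderOpenRoute D' l := by
  have hroute : (dagOf G).IsRoute (subdivide G l) ↔ (eamp G).IsRoute l :=
    and_congr (not_congr subdivide_eq_nil_iff) isChain_subdivide_iff
  simp only [colliderOpenRoute_iff_tripleChain, hroute, tripleChain_subdivide_iff hinl hsel,
    subdivide_head?, subdivide_getLast?]
  simp [hinl]

def NoBacktrack (l : List ((α ⊕ α) ⊕ Sym2 α)) : Prop :=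
  ∀ u x s v, l ≠ u ++ inl x :: inr s :: inl x :: v

theorem colliderOpenRoute_erase_backtrack {D : Set ((α ⊕ α) ⊕ Sym2 α)}
    {u v : List ((α ⊕ α) ⊕ Sym2 α)} {x : α ⊕ α} {s : Sym2 α}
    (h : (dagOf G).ColliderOpenRoute D (u ++ inl x :: inr s :: inl x :: v)) :
    (dagOf G).ColliderOpenRoute D (u ++ inl x :: v) := by
  have hxD : inl x ∉ D := by
    rw [h.2 u (inl x) _ rfl]
    rintro ⟨-, -, C, hC, -, hdC⟩
    obtain rfl : C = inr s := by simpa using hC.symm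
    exact dagOf_not_dir_inr s _ hdC
  rw [colliderOpenRoute_iff_tripleChain] at h ⊢
  obtain ⟨⟨-, hch⟩, hhead, hlast, htc⟩ := h
  have hch' := List.isChain_split.1 hch
  obtain ⟨e, -, rfl, -⟩ := dagOf_adj_inl_inr.1 (List.isChain_cons_cons.1 hch'.2).1
  rw [List.tripleChain_split] at htc ⊢
  refine ⟨⟨by simp, List.isChain_split.2 ⟨hch'.1, hch'.2.tail.tail⟩⟩,
    by simpa [List.head?_append] using hhead, by simpa [List.getLast?_append] using hlast,
    htc.1, ?_, ?_⟩
  · exact fun _ _ _ _ => iff_of_false (fun h => dagOf_not_dir_inl_inr _ _ h.1) hxD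
  · exact (List.tripleChain_cons_cons.1 (List.tripleChain_cons_cons.1 htc.2.2).2).2

theorem exists_colliderOpenRoute_noBacktrack {D : Set ((α ⊕ α) ⊕ Sym2 α)}
    {l : List ((α ⊕ α) ⊕ Sym2 α)}
    (h : (dagOf G).ColliderOpenRoute D l) :
    ∃ m, (dagOf G).ColliderOpenRoute D m ∧ m.head? = l.head? ∧ m.getLast? = l.getLast? ∧
      NoBacktrack m := by
  induction hn : l.length using Nat.strong_induction_on generalizing l with
  | _ n ih =>
    by_cases hb : NoBacktrack l
    · exact ⟨l, h, rfl, rfl, hb⟩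
    · simp only [NoBacktrack, ne_eq, not_forall, not_not] at hb
      obtain ⟨u, x, s, v, rfl⟩ := hb
      obtain ⟨m, hm, hhead, hlast, hmb⟩ :=
        ih _ (by simp at hn ⊢; omega) (colliderOpenRoute_erase_backtrack h) rfl
      exact ⟨m, hm, by simp [hhead, List.head?_append], by simp [hlast, List.getLast?_append], hmb⟩

theorem subdivide_filterMap_getLeft? {m : List ((α ⊕ α) ⊕ Sym2 α)}
    (hch : m.IsChain (dagOf G).adj) (hb : NoBacktrack m)
    (hhead : ∀ w ∈ m.head?, w.isLeft) (hlast : ∀ w ∈ m.getLast?, w.isLeft) :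
    subdivide G (m.filterMap getLeft?) = m := by
  match m with
  | [] => rfl
  | [inl a] => rfl
  | inr _ :: _ => simp at hhead
  | [inl _, inr _] => simp at hlast
  | inl _ :: inr s :: inr s' :: _ =>
    exact absurd (List.isChain_cons_cons.1 hch.tail).1 (dagOf_not_adj_inr_inr s s')
  | inl a :: inl b :: r =>
    have ih := subdivide_filterMap_getLeft? (List.isChain_cons_cons.1 hch).2
      (fun u x s v h => hb (inl a :: u) x s v (by rw [h]; rfl)) (by simp)
      (by simpa [List.getLast?_cons_cons] using hlast)
    have hab : ¬ (eamp G).undir a b := by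
      rcases dagOf_adj_inl_inl.1 (List.isChain_cons_cons.1 hch).1 with h | h
      · exact fun h' => eamp_not_undir_of_dir _ _ a h ((eamp G).undir_symm _ _ h')
      · exact eamp_not_undir_of_dir _ _ b h
    simp only [List.filterMap_cons, getLeft?_inl] at ih ⊢
    rw [subdivide, if_neg hab, ih]
  | inl a :: inr s :: inl b :: r =>
    have hch' := List.isChain_cons_cons.1 (List.isChain_cons_cons.1 hch).2
    have ih := subdivide_filterMap_getLeft? hch'.2
      (fun u x s' v h => hb (inl a :: inr s :: u) x s' v (by rw [h]; rfl)) (by simp)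
      (by simpa [List.getLast?_cons_cons] using hlast)
    obtain ⟨x, y, rfl, hxy, rfl⟩ := dagOf_adj_inl_inr.1 (List.isChain_cons_cons.1 hch).1
    obtain ⟨x', y', rfl, -, hs⟩ := dagOf_adj_inl_inr.1 (adj_symm _ hch'.1)
    obtain rfl : y = x' := by
      rcases Sym2.eq_iff.1 hs with ⟨h, -⟩ | ⟨-, h⟩
      · exact (hb [] (inr x) s(x, y) r (by rw [h]; rfl)).elim
      · exact h
    simp only [List.filterMap_cons, getLeft?_inl, getLeft?_inr] at ih ⊢
    rw [subdivide, if_pos (show (eamp G).undir (inr x) (inr y) from hxy), ih]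
    rfl

theorem inl_mem_dSet_dagDet_iff {Z : Set (α ⊕ α)} {v : α ⊕ α} :
    inl v ∈ DSet (dagDet G) (inl '' Z ∪ selNodes G) ↔ v ∈ DSet (eampDet G) Z := by
  refine ⟨fun h => ?_, fun h => ?_⟩
  · suffices ∀ w, Determined (dagDet G) (inl '' Z ∪ selNodes G) w →
        ∀ v, w = inl v → Determined (eampDet G) Z v from this _ h v rfl
    intro w hw
    induction hw with
    | base w hw =>
      rintro v rfl
      rcases hw with ⟨v', hv', hv⟩ | ⟨x, y, -, ⟨⟩⟩
      exact inl_injective hv ▸ .base v' hv'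
    | step S w hSw _ ih =>
      rintro v rfl
      obtain ⟨⟨S', v'⟩, hq, hS⟩ := hSw
      obtain ⟨rfl, hv⟩ := Prod.ext_iff.1 hS
      obtain rfl := inl_injective hv
      exact .step S' _ hq fun b hb => ih (inl b) ⟨b, hb, rfl⟩ b rfl
  · induction h with
    | base a ha => exact Determined.base _ (Or.inl ⟨a, ha, rfl⟩)
    | step S a hSa _ ih =>
      exact Determined.step (inl '' S) (inl a) ⟨(S, a), hSa, rfl⟩
        fun _ ⟨b, hb, hab⟩ => hab ▸ ih b hb

end EAMPRoutes

theorem stmt9_general {α : Type*} (G : MixedGraph α)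
    (X Y Z : Set (α ⊕ α)) :
    (eamp G).LWFSep (MixedGraph.DSet (eampDet G) Z) X Y ↔
      (dagOf G).LWFSep
        (MixedGraph.DSet (dagDet G) (Sum.inl '' Z ∪ selNodes G))
        (Sum.inl '' X) (Sum.inl '' Y) := by
  have hinl (v : α ⊕ α) := inl_mem_dSet_dagDet_iff (G := G) (Z := Z) (v := v)
  have hsel : selNodes G ⊆ DSet (dagDet G) (inl '' Z ∪ selNodes G) :=
    fun _ h => Determined.base _ (Or.inr h)
  simp only [LWFSep, lwfOpenRoute_iff_colliderOpenRoute eamp_not_undir_of_dir,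
    lwfOpenRoute_iff_colliderOpenRoute (G := dagOf G) fun _ _ _ _ h => h]
  constructor
  · rintro hsep l _ _ ⟨x, hx, rfl⟩ ⟨y, hy, rfl⟩ hhead hlast hopen
    obtain ⟨m, hm, hmhead, hmlast, hmb⟩ := exists_colliderOpenRoute_noBacktrack hopen
    have hsub := subdivide_filterMap_getLeft? hm.1.2 hmb (by simp [hmhead, hhead])
      (by simp [hmlast, hlast])
    rw [← hsub, subdivide_head?] at hmhead
    rw [← hsub, subdivide_getLast?] at hmlast
    rw [← hsub, colliderOpenRoute_subdivide_iff hinl hsel] at hm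
    exact hsep _ x y hx hy (Option.map_injective inl_injective (hmhead.trans hhead))
      (Option.map_injective inl_injective (hmlast.trans hlast)) hm
  · rintro hsep l x y hx hy hhead hlast hopen
    exact hsep (subdivide G l) (inl x) (inl y) ⟨x, hx, rfl⟩ ⟨y, hy, rfl⟩
      (by simp [subdivide_head?, hhead]) (by simp [subdivide_getLast?, hlast])
      ((colliderOpenRoute_subdivide_iff hinl hsel).2 hopen)

/-- Theorem 3: `I_LWF(G') = [I_LWF(G'')]^S`: for all disjoint
`X, Y, Z ⊆ V ∪ ε`, X is LWF-separated from Y given Z in G' iff X is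
LWF-separated from Y given `Z ∪ S` in G'' (with the same deterministic
relationships). -/
theorem stmt9 {α : Type*} (G : MixedGraph α) (hG : G.IsChainGraph)
    (X Y Z : Set (α ⊕ α)) (hXY : Disjoint X Y) (hXZ : Disjoint X Z) (hYZ : Disjoint Y Z) :
    (eamp G).LWFSep (MixedGraph.DSet (eampDet G) Z) X Y ↔
      (dagOf G).LWFSep
        (MixedGraph.DSet (dagDet G) (Sum.inl '' Z ∪ selNodes G))
        (Sum.inl '' X) (Sum.inl '' Y) :=
  stmt9_general G X Y Z
end

section
/- Corollary 2: For every AMP CG G over V there exists a DAG G'' over V ∪ ε ∪ S with deterministic nodes, such that for all disjoint X, Y, Z ⊆ V: X ⊥_G Y | Z in the AMP interpretation of G if and only if X ⊥_{G''} Y | Z ∪ S in G'' (d-separation with deterministic nodes). That is, I_{AMP}(G) = [I(G'')]_ε^S. -/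
/-!
An open path from `x` to `y` exists iff an open walk does: a repeated node `B` can be spliced
out, because at the junction the two visits of `B` together make it passable, acyclicity
excluding walks that leave `B` by `B → c` and come back. Whether an open walk can go on through
a node depends only on the kind of edge it arrived by, so separation becomes reachability on
pairs (edge kind, node). Reachability in `G''`, given `D(Z ∪ S)`, simulates reachability in `G`
step by step: an undirected edge `A − B` is traversed as `ε^A → S_{ε^Aε^B} ← ε^B`, the
selection node being conditioned on, and `ε^B` is determined exactly when `B` and all its
parents are in `Z`, i.e. exactly when AMP separation forbids passing through `B` between two
undirected edges.
-/

namespace MixedGraph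

variable {β : Type*} {H : MixedGraph β} {D : Set β}

lemma dSet_subset {det : Set (Set β × β)} {Z T : Set β} (hZ : Z ⊆ T)
    (hT : ∀ S a, (S, a) ∈ det → S ⊆ T → a ∈ T) : DSet det Z ⊆ T := by
  intro a ha
  induction ha with
  | base a h => exact hZ h
  | step S a hdet _ ih => exact hT S a hdet ih

lemma hasSemidirectedCycle_iff : H.HasSemidirectedCycle ↔
    ∃ a b, H.dir a b ∧ Relation.ReflTransGen (fun u v => H.dir u v ∨ H.undir u v) b a := by
  constructor
  · rintro ⟨n, f, hcyc, h01, hstep⟩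
    have hreach : ∀ i : Fin (n + 1),
        Relation.ReflTransGen (fun u v => H.dir u v ∨ H.undir u v) (f 1) (f i.succ) := by
      intro i
      induction i using Fin.induction with
      | zero => rw [Fin.succ_zero_eq_one]
      | succ i ih => exact ih.tail (by simpa only [Fin.succ_castSucc] using hstep i.succ)
    refine ⟨f 0, f 1, h01, ?_⟩
    simpa only [Fin.succ_last, ← hcyc] using hreach (Fin.last n)
  · rintro ⟨a, b, hab, hba⟩
    obtain ⟨l, hchain, hlast⟩ := List.exists_isChain_cons_of_relationReflTransGen hba
    have hchain' := List.isChain_iff_getElem.mp (hchain.cons_cons (a := a) (Or.inl hab))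
    refine ⟨l.length, fun i => (a :: b :: l)[i.val], ?_, hab,
      fun i => hchain' i (by simp; omega)⟩
    rw [List.getLast_eq_getElem] at hlast
    simpa using hlast.symm

lemma IsChainGraph.not_transGen_dir_self (hH : H.IsChainGraph) (v : β) :
    ¬ Relation.TransGen H.dir v v := by
  intro hv
  obtain ⟨b, hvb, hbv⟩ := Relation.TransGen.head'_iff.mp hv
  exact hH.2 (hasSemidirectedCycle_iff.mpr
    ⟨v, b, hvb, Relation.ReflTransGen.mono (fun _ _ => Or.inl) _ _ hbv⟩)

lemma isDAG_of_acyclic (hundir : ∀ a b, ¬ H.undir a b)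
    (hacy : ∀ v, ¬ Relation.TransGen H.dir v v) : H.IsDAG := by
  refine ⟨⟨⟨fun a h => hacy a (.single h), fun a => hundir a a,
    fun a b h h' => hacy a (.head h (.single h')), fun a b _ => hundir a b⟩, ?_⟩, hundir⟩
  rintro hcyc
  obtain ⟨a, b, hab, hba⟩ := hasSemidirectedCycle_iff.mp hcyc
  exact hacy a (.head' hab
    (Relation.ReflTransGen.mono (fun u v h => h.resolve_right (hundir u v)) _ _ hba))

inductive EdgeKind
  | head | tail | line

def EdgeKind.reverse : EdgeKind → EdgeKind
  | .head => .tail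
  | .tail => .head
  | .line => .line

variable (H) in
def edge : EdgeKind → β → β → Prop
  | .head, u, v => H.dir u v
  | .tail, u, v => H.dir v u
  | .line, u, v => H.undir u v

lemma adj_iff_exists_edge {u v : β} : H.adj u v ↔ ∃ k, H.edge k u v := by
  constructor
  · rintro (h | h | h)
    exacts [⟨.head, h⟩, ⟨.tail, h⟩, ⟨.line, h⟩]
  · rintro ⟨_ | _ | _, h⟩
    exacts [Or.inl h, Or.inr (Or.inl h), Or.inr (Or.inr h)]

lemma edge_reverse {k : EdgeKind} {u v : β} : H.edge k.reverse u v ↔ H.edge k v u := by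
  cases k
  · rfl
  · rfl
  · exact ⟨H.undir_symm _ _, H.undir_symm _ _⟩

lemma Simple.edge_iff_eq (hs : H.Simple) {t : EdgeKind} {u v : β} (h : H.edge t u v)
    (k : EdgeKind) : H.edge k u v ↔ t = k := by
  obtain ⟨-, -, hasymm, hdu⟩ := hs
  cases t <;> cases k <;> simp only [edge, reduceCtorEq, iff_true, iff_false] at h ⊢
  all_goals first | exact h | grind [H.undir_symm u v]

lemma Simple.triplex_iff (hs : H.Simple) {t e : EdgeKind} {A B C : β} (hA : H.edge t A B)
    (hC : H.edge e B C) : H.triplex A B C ↔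
      (t = .head ∧ e = .tail) ∨ (t = .head ∧ e = .line) ∨ (t = .line ∧ e = .tail) := by
  change (H.edge .head A B ∧ H.edge .tail B C) ∨ (H.edge .head A B ∧ H.edge .line B C) ∨
    (H.edge .line A B ∧ H.edge .tail B C) ↔ _
  simp only [hs.edge_iff_eq hA, hs.edge_iff_eq hC]

lemma Simple.mem_pa_singleton (hs : H.Simple) {p B : β} : p ∈ H.pa {B} ↔ H.dir p B := by
  constructor
  · rintro ⟨-, _, rfl, h⟩
    exact h
  · intro h
    exact ⟨by rintro rfl; exact hs.1 p h, B, rfl, h⟩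

lemma Simple.not_adj_self (hs : H.Simple) (a : β) : ¬ H.adj a a := by
  rintro (h | h | h)
  exacts [hs.1 a h, hs.1 a h, hs.2.1 a h]

lemma adj.symm {A B : β} (h : H.adj A B) : H.adj B A := by
  rcases h with h | h | h
  exacts [Or.inr (Or.inl h), Or.inl h, Or.inr (Or.inr (H.undir_symm _ _ h))]

lemma triplex.symm {A B C : β} (h : H.triplex A B C) : H.triplex C B A := by
  rcases h with ⟨h1, h2⟩ | ⟨h1, h2⟩ | ⟨h1, h2⟩
  exacts [Or.inl ⟨h2, h1⟩, Or.inr (Or.inr ⟨H.undir_symm _ _ h2, h1⟩),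
    Or.inr (Or.inl ⟨h2, H.undir_symm _ _ h1⟩)]

lemma nontriplex.symm {A B C : β} (h : H.nontriplex A B C) : H.nontriplex C B A :=
  ⟨h.2.1.symm, h.1.symm, fun h' => h.2.2 h'.symm⟩

variable (H D) in
/-- An open walk may pass through `B` entering it by an edge of kind `t` (`none`: the walk
starts at `B`) and leaving it by one of kind `e`. -/
def Passable : Option EdgeKind → EdgeKind → β → Prop
  | some .head, .tail, B | some .head, .line, B | some .line, .tail, B => B ∈ D ∪ H.san D
  | some .line, .line, B => B ∈ D → ∃ p ∈ H.pa {B}, p ∉ D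
  | _, _, B => B ∉ D

@[simp] lemma passable_head {t : Option EdgeKind} {B : β} :
    H.Passable D t .head B ↔ B ∉ D := by
  rcases t with _ | _ | _ | _ <;> rfl

@[simp] lemma passable_some_tail {e : EdgeKind} {B : β} :
    H.Passable D (some .tail) e B ↔ B ∉ D := by
  cases e <;> rfl

lemma mem_union_san_of_dir {B w : β} (h : H.dir B w) (hw : w ∈ D ∪ H.san D) :
    B ∈ D ∪ H.san D := by
  by_cases hB : B ∈ D
  · exact Or.inl hB
  · rcases hw with hw | ⟨-, w', hw', hww'⟩
    · exact Or.inr ⟨hB, w, hw, .single h⟩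
    · exact Or.inr ⟨hB, w', hw', .head h hww'⟩

/-- The local core of splicing out a loop `B … B` of an open walk: `t`, `e` are the kinds of the
edges around the first visit of `B`, and `t'`, `e'` those around the second visit, read
backwards. -/
lemma passable_of_loop {B : β} {t e t' e' : EdgeKind}
    (h : H.Passable D (some t) e B) (h' : H.Passable D (some t') e' B)
    (hhead : e = .head ∨ e' = .head → B ∈ D ∪ H.san D)
    (htail : e = .tail ∨ e' = .tail → ∃ p ∈ H.pa {B}, p ∉ D) :
    H.Passable D (some t) t'.reverse B := by
  cases t <;> cases e <;> cases t' <;> cases e' <;> simp_all [Passable, EdgeKind.reverse]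

variable (H D) in
def OpenTriple (A B C : β) : Prop :=
  (H.triplex A B C → B ∈ D ∪ H.san D) ∧
  (H.nontriplex A B C → B ∈ D → H.undir A B ∧ H.undir B C ∧ ∃ p ∈ H.pa {B}, p ∉ D)

lemma Simple.openTriple_iff (hs : H.Simple) {t e : EdgeKind} {A B C : β} (hA : H.edge t A B)
    (hC : H.edge e B C) : H.OpenTriple D A B C ↔ H.Passable D (some t) e B := by
  have hnt : H.nontriplex A B C ↔ ¬ H.triplex A B C :=
    ⟨fun h => h.2.2,
      fun h => ⟨adj_iff_exists_edge.mpr ⟨t, hA⟩, adj_iff_exists_edge.mpr ⟨e, hC⟩, h⟩⟩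
  rw [OpenTriple, hnt, hs.triplex_iff hA hC]
  change _ ∧ (_ → _ → H.edge .line A B ∧ H.edge .line B C ∧ _) ↔ _
  rw [hs.edge_iff_eq hA, hs.edge_iff_eq hC]
  cases t <;> cases e <;> simp [Passable]

lemma OpenTriple.symm {A B C : β} (h : H.OpenTriple D A B C) : H.OpenTriple D C B A := by
  refine ⟨fun ht => h.1 ht.symm, fun hnt hB => ?_⟩
  obtain ⟨hAB, hBC, hp⟩ := h.2 hnt.symm hB
  exact ⟨H.undir_symm _ _ hBC, H.undir_symm _ _ hAB, hp⟩

variable (H D) in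
def OpenWalk (l : List β) : Prop :=
  H.IsRoute l ∧ ∀ A B C, [A, B, C] <:+: l → H.OpenTriple D A B C

lemma ampOpenPath_iff {l : List β} : H.AMPOpenPath D l ↔ H.OpenWalk D l ∧ l.Nodup := by
  simp only [AMPOpenPath, OpenWalk, OpenTriple, forall_and]
  tauto

lemma openWalk_singleton (a : β) : H.OpenWalk D [a] := by
  refine ⟨⟨List.cons_ne_nil _ _, List.isChain_singleton a⟩, fun A B C h => ?_⟩
  simpa using h.length_le

lemma openWalk_cons_cons {A B : β} {l : List β} : H.OpenWalk D (A :: B :: l) ↔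
    H.adj A B ∧ H.OpenWalk D (B :: l) ∧ ∀ C, l.head? = some C → H.OpenTriple D A B C := by
  simp only [OpenWalk, IsRoute, List.Chain', List.isChain_cons_cons,
    List.infix_cons_iff (l₂ := B :: l), List.cons_prefix_cons,
    List.singleton_prefix_iff_head?_eq_some, ne_eq, reduceCtorEq, not_false_eq_true, true_and,
    or_imp, forall_and, and_imp]
  constructor
  · rintro ⟨⟨hAB, hchain⟩, hfirst, hrest⟩
    exact ⟨hAB, ⟨hchain, hrest⟩, fun C hC => hfirst A B C rfl rfl hC⟩
  · rintro ⟨hAB, ⟨hchain, hrest⟩, hfirst⟩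
    exact ⟨⟨hAB, hchain⟩, by rintro _ _ C rfl rfl hC; exact hfirst C hC, hrest⟩

lemma OpenWalk.infix {l l' : List β} (h : H.OpenWalk D l) (hl : l' <:+: l) (hne : l' ≠ []) :
    H.OpenWalk D l' :=
  ⟨⟨hne, h.1.2.infix hl⟩, fun A B C h' => h.2 A B C (h'.trans hl)⟩

lemma OpenWalk.reverse {l : List β} (h : H.OpenWalk D l) : H.OpenWalk D l.reverse := by
  refine ⟨⟨by simpa using h.1.1, ?_⟩, fun A B C h' => ?_⟩
  · exact List.isChain_reverse.mpr (h.1.2.imp fun _ _ => adj.symm)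
  · exact (h.2 C B A (by simpa using h'.reverse)).symm

variable (H D) in
/-- `H.OpenReach D y t B`: an open walk runs from `B` to `y`, where `B` is entered by an edge of
kind `t` (`none`: the walk starts at `B`). Recording only this kind, not the previous node,
makes the relation easy to transport to other graphs. -/
inductive OpenReach (y : β) : Option EdgeKind → β → Prop
  | last (t : Option EdgeKind) : OpenReach y t y
  | step {B C : β} (t : Option EdgeKind) (e : EdgeKind) : H.edge e B C → H.Passable D t e B →
      OpenReach y (some e) C → OpenReach y t B

lemma OpenReach.not_mem_of_some_tail {y B : β} (hy : y ∉ D)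
    (h : H.OpenReach D y (some .tail) B) : B ∉ D := by
  cases h with
  | last => exact hy
  | step _ _ _ hpass _ => exact passable_some_tail.mp hpass

lemma OpenReach.of_passable {y B : β} {t t' : Option EdgeKind} (h : H.OpenReach D y t B)
    (hpass : ∀ e, H.Passable D t e B → H.Passable D t' e B) : H.OpenReach D y t' B := by
  cases h with
  | last => exact .last _
  | step _ e he hp hr => exact .step _ e he (hpass e hp) hr

lemma OpenReach.of_some_line {y B : β} {t : Option EdgeKind}
    (h : H.OpenReach D y (some .line) B) (hpass : H.Passable D t .tail B) :
    H.OpenReach D y t B :=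
  h.of_passable fun e hp => by
    rcases t with _ | _ | _ | _ <;> cases e <;> simp_all [Passable]

lemma OpenReach.some_line_of_some_head {y B : β} (h : H.OpenReach D y (some .head) B)
    (hpass : H.Passable D (some .line) .line B) : H.OpenReach D y (some .line) B :=
  h.of_passable fun e hp => by cases e <;> simp_all [Passable]

lemma Simple.exists_openReach_of_openWalk (hs : H.Simple) {y : β} :
    ∀ {l : List β} {A B : β}, H.OpenWalk D (A :: B :: l) → (B :: l).getLast? = some y →
      ∃ t, H.edge t A B ∧ H.OpenReach D y (some t) B
  | [], A, B, h, hy => by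
    obtain ⟨t, ht⟩ := adj_iff_exists_edge.mp (openWalk_cons_cons.mp h).1
    obtain rfl : B = y := by simpa using hy
    exact ⟨t, ht, .last _⟩
  | C :: l, A, B, h, hy => by
    obtain ⟨hAB, hwalk, htriple⟩ := openWalk_cons_cons.mp h
    obtain ⟨t, ht⟩ := adj_iff_exists_edge.mp hAB
    obtain ⟨e, he, hreach⟩ := hs.exists_openReach_of_openWalk hwalk (by simpa using hy)
    exact ⟨t, ht, .step _ e he ((hs.openTriple_iff ht he).mp (htriple C rfl)) hreach⟩

lemma Simple.openReach_of_openWalk (hs : H.Simple) {x y : β} {l : List β}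
    (h : H.OpenWalk D l) (hx : l.head? = some x) (hy : l.getLast? = some y) (hxD : x ∉ D) :
    H.OpenReach D y none x := by
  obtain ⟨l, rfl⟩ := List.head?_eq_some_iff.mp hx
  rcases l with _ | ⟨B, l⟩
  · obtain rfl : x = y := by simpa using hy
    exact .last _
  · obtain ⟨e, he, hreach⟩ := hs.exists_openReach_of_openWalk h (by simpa using hy)
    exact .step _ e he hxD hreach

lemma Simple.exists_openWalk_of_openReach (hs : H.Simple) {y : β} {t : Option EdgeKind} {B : β}
    (h : H.OpenReach D y t B) :
    ∃ l, H.OpenWalk D (B :: l) ∧ (B :: l).getLast? = some y ∧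
      ∀ k A C, t = some k → H.edge k A B → l.head? = some C → H.OpenTriple D A B C := by
  induction h with
  | last t => exact ⟨[], openWalk_singleton _, rfl, by simp⟩
  | @step B C t e he hpass _ ih =>
    obtain ⟨l, hwalk, hy, hnext⟩ := ih
    refine ⟨C :: l, openWalk_cons_cons.mpr ⟨adj_iff_exists_edge.mpr ⟨e, he⟩, hwalk,
      fun C' hC' => hnext e B C' rfl he hC'⟩, by simpa using hy, ?_⟩
    rintro k A _ rfl hk ⟨⟩
    exact (hs.openTriple_iff hk he).mpr hpass

lemma OpenWalk.mem_union_san_or_forall_transGen (hs : H.Simple) :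
    ∀ {l : List β} {B c : β}, H.OpenWalk D (B :: c :: l) → H.dir B c →
      B ∈ D ∪ H.san D ∨ ∀ v ∈ c :: l, Relation.TransGen H.dir B v
  | [], B, c, _, hBc => Or.inr fun v hv => by
    obtain rfl : v = c := by simpa using hv
    exact .single hBc
  | d :: l, B, c, h, hBc => by
    obtain ⟨-, hwalk, htriple⟩ := openWalk_cons_cons.mp h
    obtain ⟨e, he⟩ := adj_iff_exists_edge.mp (openWalk_cons_cons.mp hwalk).1
    have hpass := (hs.openTriple_iff (t := .head) hBc he).mp (htriple d rfl)
    cases e with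
    | head =>
      refine (hwalk.mem_union_san_or_forall_transGen hs he).imp (mem_union_san_of_dir hBc)
        fun hrun v hv => ?_
      rcases List.mem_cons.mp hv with rfl | hv
      exacts [.single hBc, .head hBc (hrun v hv)]
    | tail | line => exact Or.inl (mem_union_san_of_dir hBc hpass)

lemma OpenWalk.mem_union_san_of_dir_of_mem (hH : H.IsChainGraph) {l : List β} {B c : β}
    (h : H.OpenWalk D (B :: c :: l)) (hBc : H.dir B c) (hB : B ∈ l) : B ∈ D ∪ H.san D :=
  (h.mem_union_san_or_forall_transGen hH.1 hBc).resolve_right fun hrun =>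
    hH.not_transGen_dir_self B (hrun B (List.mem_cons_of_mem _ hB))

lemma OpenWalk.exists_passable_of_loop (hH : H.IsChainGraph) {A B : β} {m : List β}
    (hm : m ≠ []) (h : H.OpenWalk D (A :: B :: (m ++ [B]))) :
    ∃ t e, H.edge t A B ∧ H.Passable D (some t) e B ∧ (e = .head → B ∈ D ∪ H.san D) ∧
      (e = .tail → ∃ p ∈ H.pa {B}, p ∉ D) := by
  obtain ⟨c, m, rfl⟩ := List.exists_cons_of_ne_nil hm
  obtain ⟨hAB, hwalk, htriple⟩ := openWalk_cons_cons.mp h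
  obtain ⟨t, ht⟩ := adj_iff_exists_edge.mp hAB
  obtain ⟨e, he⟩ := adj_iff_exists_edge.mp (openWalk_cons_cons.mp hwalk).1
  refine ⟨t, e, ht, (hH.1.openTriple_iff ht he).mp (htriple c rfl), ?_, ?_⟩
  · rintro rfl
    exact hwalk.mem_union_san_of_dir_of_mem hH he (by simp)
  · rintro rfl
    obtain ⟨n, l, hnl⟩ : ∃ n l, m ++ [B] = n :: l := by cases m <;> simp
    rw [List.cons_append, hnl] at hwalk
    obtain ⟨-, hwalk', htriple'⟩ := openWalk_cons_cons.mp hwalk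
    obtain ⟨e', he'⟩ := adj_iff_exists_edge.mp (openWalk_cons_cons.mp hwalk').1
    refine ⟨c, hH.1.mem_pa_singleton.mpr he, ?_⟩
    simpa using (hH.1.openTriple_iff (t := .tail) he he').mp (htriple' n rfl)

lemma OpenWalk.append_cons {B : β} {q : List β} (hq : H.OpenWalk D (B :: q)) :
    ∀ {p : List β}, H.OpenWalk D (p ++ [B]) →
      (∀ A C, p.getLast? = some A → q.head? = some C → H.OpenTriple D A B C) →
      H.OpenWalk D (p ++ B :: q)
  | [], _, _ => hq
  | [a], hp, hjoin => openWalk_cons_cons.mpr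
      ⟨(openWalk_cons_cons.mp hp).1, hq, fun C hC => hjoin a C rfl hC⟩
  | a :: b :: p, hp, hjoin => by
    obtain ⟨hab, hp', htriple⟩ := openWalk_cons_cons.mp hp
    refine openWalk_cons_cons.mpr ⟨hab, ?_, fun C hC => ?_⟩
    · exact hq.append_cons (p := b :: p) hp' fun A C hA hC => hjoin A C (by simpa using hA) hC
    · cases p <;> exact htriple C hC

lemma OpenWalk.splice (hH : H.IsChainGraph) {p m q : List β} {B : β}
    (h : H.OpenWalk D (p ++ B :: m ++ B :: q)) : H.OpenWalk D (p ++ B :: q) := by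
  have hm : m ≠ [] := by
    rintro rfl
    exact hH.1.not_adj_self B (List.isChain_pair.mp (h.1.2.infix ⟨p, q, by simp⟩))
  refine (h.infix ⟨p ++ B :: m, [], by simp⟩ (by simp)).append_cons
    (h.infix ⟨[], m ++ B :: q, by simp⟩ (by simp)) fun A C hA hC => ?_
  obtain ⟨p, rfl⟩ := List.getLast?_eq_some_iff.mp hA
  obtain ⟨q, rfl⟩ := List.head?_eq_some_iff.mp hC
  obtain ⟨t, e, ht, hpass, hhead, htail⟩ := (h.infix (l' := A :: B :: (m ++ [B]))
    ⟨p, C :: q, by simp⟩ (by simp)).exists_passable_of_loop hH hm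
  have hback : H.OpenWalk D (C :: B :: (m.reverse ++ [B])) := by
    simpa using (h.infix (l' := B :: (m ++ [B, C])) ⟨p ++ [A], q, by simp⟩ (by simp)).reverse
  obtain ⟨t', e', ht', hpass', hhead', htail'⟩ :=
    hback.exists_passable_of_loop hH (by simpa using hm)
  exact (hH.1.openTriple_iff ht (edge_reverse.mpr ht')).mpr <| passable_of_loop hpass hpass'
    (fun h => h.elim hhead hhead') (fun h => h.elim htail htail')

lemma OpenWalk.exists_nodup (hH : H.IsChainGraph) {l : List β} (h : H.OpenWalk D l) :
    ∃ l', H.OpenWalk D l' ∧ l'.Nodup ∧ l'.head? = l.head? ∧ l'.getLast? = l.getLast? := by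
  by_cases hnd : l.Nodup
  · exact ⟨l, h, hnd, rfl, rfl⟩
  simp only [List.nodup_iff_sublist, not_forall, not_not] at hnd
  obtain ⟨B, hB⟩ := hnd
  obtain ⟨r₁, r₂, rfl, h₁, h₂⟩ := List.cons_sublist_iff.mp hB
  obtain ⟨p, m, rfl⟩ := List.append_of_mem h₁
  obtain ⟨m', q, rfl⟩ := List.append_of_mem (h₂.subset (List.mem_singleton_self B))
  have hsplice : H.OpenWalk D (p ++ B :: q) := (show H.OpenWalk D (p ++ B :: (m ++ m') ++ B :: q)
    by simpa using h).splice hH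
  obtain ⟨l', hl', hnd, hhead, hlast⟩ := hsplice.exists_nodup hH
  refine ⟨l', hl', hnd, ?_, ?_⟩
  · rw [hhead]; cases p <;> simp
  · rw [hlast, List.getLast?_append_cons, show p ++ B :: m ++ (m' ++ B :: q) =
      (p ++ B :: m ++ m') ++ B :: q by simp, List.getLast?_append_cons]
termination_by l.length
decreasing_by simp_all; omega

theorem IsChainGraph.ampSep_iff (hH : H.IsChainGraph) {X Y : Set β} (hX : Disjoint X D) :
    H.AMPSep D X Y ↔ ∀ x ∈ X, ∀ y ∈ Y, ¬ H.OpenReach D y none x := by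
  constructor
  · intro hsep x hx y hy hreach
    obtain ⟨l, hwalk, hlast, -⟩ := hH.1.exists_openWalk_of_openReach hreach
    obtain ⟨l', hwalk', hnd, hhead', hlast'⟩ := hwalk.exists_nodup hH
    exact hsep l' x y hx hy hhead' (hlast'.trans hlast) (ampOpenPath_iff.mpr ⟨hwalk', hnd⟩)
  · intro h l x y hx hy hhead hlast hopen
    exact h x hx y hy <| hH.1.openReach_of_openWalk (ampOpenPath_iff.mp hopen).1 hhead hlast
      (Set.disjoint_left.mp hX hx)

end MixedGraph

section Construction

open MixedGraph

variable {α : Type*} {G : MixedGraph α}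

-- The nodes `A` and `ε^A` of `G''`.
abbrev varNode (a : α) : (α ⊕ α) ⊕ Sym2 α := Sum.inl (Sum.inl a)

abbrev errNode (a : α) : (α ⊕ α) ⊕ Sym2 α := Sum.inl (Sum.inr a)

lemma dagOf_dir_varNode_left {a : α} {v : (α ⊕ α) ⊕ Sym2 α} :
    (dagOf G).dir (varNode a) v ↔ ∃ b, v = varNode b ∧ G.dir a b := by
  rcases v with (b | b) | s <;> simp [dagOf, dagDir, eamp, eampDir]

lemma dagOf_dir_varNode_right {u : (α ⊕ α) ⊕ Sym2 α} {b : α} :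
    (dagOf G).dir u (varNode b) ↔ (∃ a, u = varNode a ∧ G.dir a b) ∨ u = errNode b := by
  rcases u with (a | a) | s <;> simp [dagOf, dagDir, eamp, eampDir, eq_comm]

lemma dagOf_not_dir_errNode_right {u : (α ⊕ α) ⊕ Sym2 α} {b : α} :
    ¬ (dagOf G).dir u (errNode b) := by
  rcases u with (a | a) | s <;> simp [dagOf, dagDir, eamp, eampDir]

lemma dagOf_dir_errNode_left {a : α} {v : (α ⊕ α) ⊕ Sym2 α} :
    (dagOf G).dir (errNode a) v ↔
      v = varNode a ∨ ∃ w, G.undir a w ∧ v = Sum.inr s(a, w) := by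
  rcases v with (b | b) | s <;> simp [dagOf, dagDir, eamp, eampDir, eq_comm]

lemma dagOf_dir_sel_right {u : (α ⊕ α) ⊕ Sym2 α} {s : Sym2 α} :
    (dagOf G).dir u (Sum.inr s) ↔ ∃ a w, u = errNode a ∧ G.undir a w ∧ s = s(a, w) := by
  rcases u with (a | a) | s' <;> simp [dagOf, dagDir]

lemma dagOf_not_dir_sel_left {s : Sym2 α} {v : (α ⊕ α) ⊕ Sym2 α} :
    ¬ (dagOf G).dir (Sum.inr s) v := by
  rcases v with (b | b) | s' <;> simp [dagOf, dagDir]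

lemma dagOf_transGen_varNode {a : α} {w : (α ⊕ α) ⊕ Sym2 α}
    (h : Relation.TransGen (dagOf G).dir (varNode a) w) :
    ∃ b, w = varNode b ∧ Relation.TransGen G.dir a b := by
  induction h with
  | single h =>
    obtain ⟨b, rfl, hb⟩ := dagOf_dir_varNode_left.mp h
    exact ⟨b, rfl, .single hb⟩
  | tail _ h ih =>
    obtain ⟨b, rfl, hb⟩ := ih
    obtain ⟨c, rfl, hc⟩ := dagOf_dir_varNode_left.mp h
    exact ⟨c, rfl, hb.tail hc⟩

lemma isDAG_dagOf (hG : G.IsChainGraph) : (dagOf G).IsDAG := by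
  refine isDAG_of_acyclic (fun _ _ h => h) fun v hv => ?_
  rcases v with (a | a) | s
  · obtain ⟨b, hb, hab⟩ := dagOf_transGen_varNode hv
    obtain rfl : a = b := by simpa using hb
    exact hG.not_transGen_dir_self a hab
  · obtain ⟨c, -, hc⟩ := Relation.TransGen.tail'_iff.mp hv
    exact dagOf_not_dir_errNode_right hc
  · obtain ⟨c, hc, -⟩ := Relation.TransGen.head'_iff.mp hv
    exact dagOf_not_dir_sel_left hc

variable (G) in
/-- `D(Z ∪ S)` in `G''`. -/
abbrev detClosure (Z : Set α) : Set ((α ⊕ α) ⊕ Sym2 α) :=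
  DSet (dagDet G) ((Sum.inl ∘ Sum.inl) '' Z ∪ selNodes G)

lemma detClosure_eq (Z : Set α) : detClosure G Z =
    varNode '' Z ∪ selNodes G ∪ errNode '' {a | a ∈ Z ∧ ∀ p, G.dir p a → p ∈ Z} := by
  refine subset_antisymm (dSet_subset (fun v hv => Or.inl hv) ?_) ?_
  · rintro S a ⟨q, ⟨A, rfl⟩ | ⟨A, rfl⟩, hSa⟩ hS <;>
      obtain ⟨rfl, rfl⟩ := Prod.mk.inj hSa
    · have hA := hS ⟨Sum.inr A, Or.inr rfl, rfl⟩
      simp [selNodes] at hA ⊢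
      exact hA.1
    · have hA := hS ⟨Sum.inl A, Or.inr rfl, rfl⟩
      have hp : ∀ p, G.dir p A → varNode p ∈ _ :=
        fun p hp => hS ⟨Sum.inl p, Or.inl ⟨p, hp, rfl⟩, rfl⟩
      simp [selNodes] at hA hp ⊢
      exact ⟨hA, hp⟩
  · rintro v ((⟨a, ha, rfl⟩ | hv) | ⟨a, ⟨ha, hpa⟩, rfl⟩)
    · exact .base _ (Or.inl ⟨a, ha, rfl⟩)
    · exact .base _ (Or.inr hv)
    · refine Determined.step _ _
        ⟨(eampPa G a ∪ {Sum.inl a}, Sum.inr a), Or.inr ⟨a, rfl⟩, rfl⟩ ?_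
      rintro _ ⟨x, ⟨p, hp, rfl⟩ | rfl, rfl⟩
      exacts [.base _ (Or.inl ⟨p, hpa p hp, rfl⟩), .base _ (Or.inl ⟨a, ha, rfl⟩)]

variable {Z : Set α}

@[simp] lemma varNode_mem_detClosure {a : α} : varNode a ∈ detClosure G Z ↔ a ∈ Z := by
  simp [detClosure_eq, selNodes]

@[simp] lemma errNode_mem_detClosure {a : α} :
    errNode a ∈ detClosure G Z ↔ a ∈ Z ∧ ∀ p, G.dir p a → p ∈ Z := by
  simp [detClosure_eq, selNodes]

lemma sel_mem_detClosure {a b : α} (h : G.undir a b) : Sum.inr s(a, b) ∈ detClosure G Z := by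
  rw [detClosure_eq]
  exact Or.inl (Or.inr ⟨a, b, h, rfl⟩)

lemma varNode_mem_detClosure_union_san {a : α} :
    varNode a ∈ detClosure G Z ∪ (dagOf G).san (detClosure G Z) ↔ a ∈ Z ∪ G.san Z := by
  constructor
  · rintro (h | ⟨ha, w, hw, haw⟩)
    · exact Or.inl (varNode_mem_detClosure.mp h)
    · obtain ⟨b, rfl, hab⟩ := dagOf_transGen_varNode haw
      exact Or.inr ⟨fun h => ha (varNode_mem_detClosure.mpr h), b,
        varNode_mem_detClosure.mp hw, hab⟩
  · rintro (h | ⟨ha, b, hb, hab⟩)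
    · exact Or.inl (varNode_mem_detClosure.mpr h)
    · refine Or.inr ⟨fun h => ha (varNode_mem_detClosure.mp h), varNode b,
        varNode_mem_detClosure.mpr hb, ?_⟩
      exact Relation.TransGen.lift varNode
        (fun _ c h => dagOf_dir_varNode_left.mpr ⟨c, rfl, h⟩) _ _ hab

lemma passable_dagOf_varNode_tail {t : Option EdgeKind} {B : α} :
    (dagOf G).Passable (detClosure G Z) t .tail (varNode B) ↔ G.Passable Z t .tail B := by
  rcases t with _ | _ | _ | _ <;> simp only [Passable, varNode_mem_detClosure,
    varNode_mem_detClosure_union_san]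

lemma passable_line_line_iff (hs : G.Simple) {B : α} :
    G.Passable Z (some .line) .line B ↔ errNode B ∉ detClosure G Z := by
  simp only [Passable, errNode_mem_detClosure, hs.mem_pa_singleton, not_and, not_forall,
    exists_prop]

lemma errNode_not_mem_detClosure_of_not_mem {B : α} (hB : B ∉ Z) :
    errNode B ∉ detClosure G Z :=
  fun h => hB (errNode_mem_detClosure.mp h).1

lemma errNode_not_mem_detClosure_of_dir {p B : α} (hp : G.dir p B) (hpZ : p ∉ Z) :
    errNode B ∉ detClosure G Z :=
  fun h => hpZ ((errNode_mem_detClosure.mp h).2 p hp)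

variable (G Z) in
/-- The state of an open walk in `G''` that simulates the state `(t, B)` of one in `G`: a walk
entering `B` by an undirected edge `A − B` corresponds to one entering `ε^B` from
`S_{ε^Aε^B}`. -/
def LiftedReach (y : α) : Option EdgeKind → α → Prop
  | some .line, B => (dagOf G).OpenReach (detClosure G Z) (varNode y) (some .tail) (errNode B)
  | t, B => (dagOf G).OpenReach (detClosure G Z) (varNode y) t (varNode B)

variable {y : α}

lemma liftedReach_last (hy : y ∉ Z) (t : Option EdgeKind) : LiftedReach G Z y t y := by
  rcases t with _ | _ | _ | _
  iterate 3 exact .last _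
  exact .step _ .head (dagOf_dir_errNode_left.mpr (Or.inl rfl))
    (passable_head.mpr (errNode_not_mem_detClosure_of_not_mem hy)) (.last _)

lemma liftedReach_of_dir {t : Option EdgeKind} {B C : α} (hBC : G.dir B C)
    (hpass : G.Passable Z t .head B) (hC : LiftedReach G Z y (some .head) C) :
    LiftedReach G Z y t B := by
  have hB : B ∉ Z := passable_head.mp hpass
  have hvar : ∀ t', (dagOf G).OpenReach (detClosure G Z) (varNode y) t' (varNode B) :=
    fun t' => .step t' .head (dagOf_dir_varNode_left.mpr ⟨C, rfl, hBC⟩)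
      (passable_head.mpr (varNode_mem_detClosure.not.mpr hB)) hC
  rcases t with _ | _ | _ | _
  iterate 3 exact hvar _
  exact .step _ .head (dagOf_dir_errNode_left.mpr (Or.inl rfl))
    (passable_head.mpr (errNode_not_mem_detClosure_of_not_mem hB)) (hvar _)

lemma liftedReach_of_dir_rev {t : Option EdgeKind} {B C : α} (hCB : G.dir C B) (hCZ : C ∉ Z)
    (hpass : G.Passable Z t .tail B) (hC : LiftedReach G Z y (some .tail) C) :
    LiftedReach G Z y t B := by
  have hvar : ∀ t', G.Passable Z t' .tail B →
      (dagOf G).OpenReach (detClosure G Z) (varNode y) t' (varNode B) :=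
    fun t' hp => .step t' .tail (dagOf_dir_varNode_right.mpr (Or.inl ⟨C, rfl, hCB⟩))
      (passable_dagOf_varNode_tail.mpr hp) hC
  rcases t with _ | _ | _ | _
  iterate 3 exact hvar _ hpass
  exact .step _ .head (dagOf_dir_errNode_left.mpr (Or.inl rfl))
    (passable_head.mpr (errNode_not_mem_detClosure_of_dir hCB hCZ)) (hvar (some .head) hpass)

lemma liftedReach_of_undir (hs : G.Simple) {t : Option EdgeKind} {B C : α} (hBC : G.undir B C)
    (hpass : G.Passable Z t .line B) (hhead : t = some .head → ∃ p, G.dir p B ∧ p ∉ Z)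
    (hC : LiftedReach G Z y (some .line) C) : LiftedReach G Z y t B := by
  have herr : errNode B ∉ detClosure G Z →
      (dagOf G).OpenReach (detClosure G Z) (varNode y) (some .tail) (errNode B) :=
    fun hB => .step _ .head (dagOf_dir_errNode_left.mpr (Or.inr ⟨C, hBC, rfl⟩))
      (passable_head.mpr hB)
      (.step _ .tail (dagOf_dir_sel_right.mpr ⟨C, B, rfl, G.undir_symm _ _ hBC, Sym2.eq_swap⟩)
        (Or.inl (sel_mem_detClosure hBC)) hC)
  have hvar : ∀ t', errNode B ∉ detClosure G Z → G.Passable Z t' .tail B →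
      (dagOf G).OpenReach (detClosure G Z) (varNode y) t' (varNode B) :=
    fun t' hB hp => .step t' .tail (dagOf_dir_varNode_right.mpr (Or.inr rfl))
      (passable_dagOf_varNode_tail.mpr hp) (herr hB)
  rcases t with _ | _ | _ | _
  · exact hvar _ (errNode_not_mem_detClosure_of_not_mem hpass) hpass
  · obtain ⟨p, hp, hpZ⟩ := hhead rfl
    exact hvar _ (errNode_not_mem_detClosure_of_dir hp hpZ) hpass
  · exact hvar _ (errNode_not_mem_detClosure_of_not_mem hpass) hpass
  · exact herr ((passable_line_line_iff hs).mp hpass)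

/-- The hypothesis `hhead` records that a walk entering `B` by `A → B` has `A ∉ Z`. -/
lemma liftedReach_of_openReach (hs : G.Simple) (hy : y ∉ Z) {t : Option EdgeKind} {B : α}
    (h : G.OpenReach Z y t B) (hhead : t = some .head → ∃ p, G.dir p B ∧ p ∉ Z) :
    LiftedReach G Z y t B := by
  induction h with
  | last t => exact liftedReach_last hy t
  | @step B C t e he hpass hr ih =>
    cases e with
    | head => exact liftedReach_of_dir he hpass (ih fun _ => ⟨B, he, passable_head.mp hpass⟩)
    | tail => exact liftedReach_of_dir_rev he (hr.not_mem_of_some_tail hy) hpass (ih nofun)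
    | line => exact liftedReach_of_undir hs he hpass hhead (ih nofun)

lemma openReach_of_dagOf (hs : G.Simple) {t : Option EdgeKind}
    {v : (α ⊕ α) ⊕ Sym2 α} (h : (dagOf G).OpenReach (detClosure G Z) (varNode y) t v) :
    match v with
    | Sum.inl (Sum.inl B) => G.OpenReach Z y t B
    | Sum.inl (Sum.inr B) => t = some .tail → G.OpenReach Z y (some .line) B
    | Sum.inr s => t = some .head →
      ∃ u w, s = s(u, w) ∧ G.undir u w ∧ G.OpenReach Z y (some .line) u := by
  induction h with
  | last t => exact .last t
  | @step v w t e he hpass _ ih =>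
    rcases v with (B | B) | s <;> cases e
    · obtain ⟨C, rfl, hBC⟩ := dagOf_dir_varNode_left.mp he
      exact .step t .head hBC (passable_head.mpr (by simpa using hpass)) ih
    · rcases dagOf_dir_varNode_right.mp he with ⟨C, rfl, hCB⟩ | rfl
      · exact .step t .tail hCB (passable_dagOf_varNode_tail.mp hpass) ih
      · exact (ih rfl).of_some_line (passable_dagOf_varNode_tail.mp hpass)
    · exact he.elim
    · rintro rfl
      have hline := (passable_line_line_iff hs).mpr (passable_head.mp hpass)
      rcases dagOf_dir_errNode_left.mp he with rfl | ⟨C, hBC, rfl⟩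
      · exact ih.some_line_of_some_head hline
      · obtain ⟨u, u', hsym, hu, hreach⟩ := ih rfl
        rcases Sym2.eq_iff.mp hsym with ⟨rfl, -⟩ | ⟨rfl, rfl⟩
        · exact hreach
        · exact .step _ .line hBC hline hreach
    · exact absurd he dagOf_not_dir_errNode_right
    · exact he.elim
    · exact absurd he dagOf_not_dir_sel_left
    · rintro -
      obtain ⟨a, a', rfl, haa', rfl⟩ := dagOf_dir_sel_right.mp he
      exact ⟨a, a', rfl, haa', ih rfl⟩
    · exact he.elim

theorem openReach_dagOf_iff (hs : G.Simple) {x : α} (hy : y ∉ Z) :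
    (dagOf G).OpenReach (detClosure G Z) (varNode y) none (varNode x) ↔ G.OpenReach Z y none x :=
  ⟨openReach_of_dagOf hs, fun h => liftedReach_of_openReach hs hy h nofun⟩

end Construction

/-- Corollary 2: for every AMP CG G there exist a DAG G'' with
deterministic nodes and a set S of selection nodes such that for all disjoint
`X, Y, Z ⊆ V`, X is AMP-separated from Y given Z in G iff X is separated from Y
given `Z ∪ S` in G'' (separation with deterministic nodes); i.e.,
`I_AMP(G) = [I(G'')]_ε^S`. -/
theorem stmt11 {α : Type*} (G : MixedGraph α) (hG : G.IsChainGraph) :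
    ∃ (G'' : MixedGraph ((α ⊕ α) ⊕ Sym2 α))
      (det : Set (Set ((α ⊕ α) ⊕ Sym2 α) × ((α ⊕ α) ⊕ Sym2 α)))
      (S : Set ((α ⊕ α) ⊕ Sym2 α)),
      G''.IsDAG ∧
      ∀ X Y Z : Set α, Disjoint X Y → Disjoint X Z → Disjoint Y Z →
        (G.AMPSep Z X Y ↔
          G''.AMPSep (MixedGraph.DSet det ((Sum.inl ∘ Sum.inl) '' Z ∪ S))
            ((Sum.inl ∘ Sum.inl) '' X) ((Sum.inl ∘ Sum.inl) '' Y)) := by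
  refine ⟨dagOf G, dagDet G, selNodes G, isDAG_dagOf hG, fun X Y Z _ hXZ hYZ => ?_⟩
  have hX : Disjoint ((Sum.inl ∘ Sum.inl) '' X) (detClosure G Z) := by
    refine Set.disjoint_left.mpr ?_
    rintro _ ⟨x, hx, rfl⟩ h
    exact Set.disjoint_left.mp hXZ hx (varNode_mem_detClosure.mp h)
  rw [hG.ampSep_iff hXZ, (isDAG_dagOf hG).1.ampSep_iff hX]
  simp only [Set.forall_mem_image]
  exact forall₂_congr fun x _ => forall₂_congr fun y hy =>
    not_congr (openReach_dagOf_iff hG.1 (Set.disjoint_left.mp hYZ hy)).symm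
end
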